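/- arXiv:2302.13719 — 4 statements merged into one kernel-verified Lean document; each statement's English description precedes it below -/
import Mathlib

section
/- The subalgebra of symmetric polynomials in n variables over a commutative ring R is generated, as an R-algebra, by the elementary symmetric polynomials e_1, ..., e_n; equivalently, every polynomial in R[x_1,...,x_n] invariant under all permutations of the variables can be written as a polynomial in e_1, ..., e_n. -/
open MvPolynomial

theorem MvPolynomial.IsSymmetric.mem_adjoin_range_esymm {σ R : Type*} [CommRing R]
    [Fintype σ] {n : ℕ} (hn : Fintype.card σ ≤ n) {p : MvPolynomial σ R} (hp : p.IsSymmetric) :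
    p ∈ Algebra.adjoin R (Set.range fun i : Fin n => esymm σ R (i + 1)) := by
  obtain ⟨q, hq⟩ := esymmAlgHom_surjective R hn ⟨p, hp⟩
  rw [Algebra.adjoin_range_eq_range_aeval]
  exact ⟨q, (esymmAlgHom_apply q).symm.trans (congrArg Subtype.val hq)⟩

theorem symmetric_polynomials_generated_by_esymm_general
    (R : Type) [CommRing R] (n : ℕ)
    (p : MvPolynomial (Fin n) R) (hp : p.IsSymmetric) :
    p ∈ Algebra.adjoin R
      {q : MvPolynomial (Fin n) R | ∃ k, 1 ≤ k ∧ k ≤ n ∧ q = MvPolynomial.esymm (Fin n) R k} := by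
  refine Algebra.adjoin_mono ?_ (hp.mem_adjoin_range_esymm (Fintype.card_fin n).le)
  rintro _ ⟨i, rfl⟩
  exact ⟨i + 1, Nat.succ_pos i, i.isLt, rfl⟩

/-- The fundamental theorem of symmetric polynomials (generation statement):
every symmetric polynomial in `n` variables over a commutative ring `R` lies in the
`R`-subalgebra generated by the elementary symmetric polynomials `e_1, ..., e_n`. -/
theorem symmetric_polynomials_generated_by_esymm
    (R : Type) [CommRing R] (n : ℕ) (hn : 1 ≤ n)
    (p : MvPolynomial (Fin n) R) (hp : p.IsSymmetric) :
    p ∈ Algebra.adjoin R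
      {q : MvPolynomial (Fin n) R | ∃ k, 1 ≤ k ∧ k ≤ n ∧ q = MvPolynomial.esymm (Fin n) R k} :=
  symmetric_polynomials_generated_by_esymm_general R n p hp
end

section
/- For every prime number p, the congruence x^8 ≡ 16 (mod p) has a solution, yet 16 is not an 8th power of a rational number. -/
/-! In a finite field the nonzero squares have index at most 2 in the multiplicative group, so
of `-1`, `2` and `-2 = (-1) * 2` at least one is a square. Each of these gives an 8th root of 16:
`a ^ 2 = ±2` gives `a ^ 8 = 16`, and `i ^ 2 = -1` gives `(1 + i) ^ 2 = 2 * i`, hence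
`(1 + i) ^ 8 = 16`. Over `ℚ`, on the other hand, `q ^ 8 = 16` forces `q ^ 2 = 2`, which is
impossible since `2` is not a rational square. -/

theorem FiniteField.isSquare_mul_of_not_isSquare {F : Type*} [Field F] [Fintype F] {a b : F}
    (ha : ¬IsSquare a) (hb : ¬IsSquare b) : IsSquare (a * b) := by
  classical
  have ha0 : a ≠ 0 := fun h ↦ ha (h ▸ IsSquare.zero)
  have hb0 : b ≠ 0 := fun h ↦ hb (h ▸ IsSquare.zero)
  rw [← quadraticChar_neg_one_iff_not_isSquare] at ha hb
  rw [← quadraticChar_one_iff_isSquare (mul_ne_zero ha0 hb0), map_mul, ha, hb, neg_one_mul,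
    neg_neg]

theorem FiniteField.isSquare_neg_one_or_two_or_neg_two (F : Type*) [Field F] [Fintype F] :
    IsSquare (-1 : F) ∨ IsSquare (2 : F) ∨ IsSquare (-2 : F) := by
  by_contra! h
  obtain ⟨hn1, h2, hn2⟩ := h
  exact hn2 (by simpa using isSquare_mul_of_not_isSquare hn1 h2)

theorem exists_pow_eight_eq_sixteen_of_isSquare {R : Type*} [CommRing R]
    (h : IsSquare (-1 : R) ∨ IsSquare (2 : R) ∨ IsSquare (-2 : R)) : ∃ x : R, x ^ 8 = 16 := by
  rcases h with ⟨i, hi⟩ | ⟨a, ha⟩ | ⟨a, ha⟩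
  · have h2i : (1 + i) ^ 2 = 2 * i := by linear_combination hi.symm
    refine ⟨1 + i, ?_⟩
    rw [show (1 + i) ^ 8 = ((1 + i) ^ 2) ^ 4 by ring, h2i,
      show (2 * i) ^ 4 = 16 * (i * i) ^ 2 by ring, ← hi]
    norm_num
  all_goals exact ⟨a, by rw [show a ^ 8 = (a * a) ^ 4 by ring, ← ha]; norm_num⟩

theorem sq_eq_two_of_pow_eight_eq_sixteen {R : Type*} [CommRing R] [LinearOrder R]
    [IsStrictOrderedRing R] {x : R} (h : x ^ 8 = 16) : x ^ 2 = 2 := by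
  refine (pow_left_inj₀ (sq_nonneg x) zero_le_two (by norm_num : 4 ≠ 0)).mp ?_
  rw [← pow_mul, h]
  norm_num

theorem Rat.not_isSquare_two : ¬IsSquare (2 : ℚ) := by
  exact_mod_cast Rat.isSquare_natCast_iff.not.mpr Nat.prime_two.not_isSquare

/-- For every prime `p`, the congruence `x^8 ≡ 16 (mod p)` has a solution,
yet `16` is not an 8th power of a rational number. -/
theorem sixteen_is_eighth_power_mod_every_prime_but_not_rational :
    (∀ p : ℕ, p.Prime → ∃ x : ZMod p, x ^ 8 = 16) ∧ ¬ ∃ q : ℚ, q ^ 8 = 16 := by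
  refine ⟨fun p hp ↦ ?_, ?_⟩
  · have : Fact p.Prime := ⟨hp⟩
    exact exists_pow_eight_eq_sixteen_of_isSquare (FiniteField.isSquare_neg_one_or_two_or_neg_two _)
  · rintro ⟨q, hq⟩
    exact Rat.not_isSquare_two ⟨q, by rw [← sq_eq_two_of_pow_eight_eq_sixteen hq, sq]⟩
end

section
/- Every finite group is isomorphic to a quotient of a finite group with trivial centre. -/
/-!
Take `D` nontrivial with trivial centre (e.g. the dihedral group of order 6) and form the regular
wreath product `D ≀ᵣ G`, which projects onto `G`. A central element `⟨a, q⟩` commutes with every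
`⟨f, 1⟩`, i.e. `a x * f (q⁻¹ * x) = f x * a x` for all `f : G → D`; a function `f` supported at one
point forces `q = 1`, and constant functions then put every `a x` in the centre of `D`.
-/

namespace RegularWreathProduct

variable {D Q : Type*} [Group D] [Group Q]

theorem left_mul_shift_eq_of_mem_center {w : D ≀ᵣ Q} (hw : w ∈ Subgroup.center (D ≀ᵣ Q))
    (f : Q → D) (x : Q) : w.left x * f (w.right⁻¹ * x) = f x * w.left x := by
  have hcomm := congrArg (fun v : D ≀ᵣ Q => v.left x) (Subgroup.mem_center_iff.mp hw ⟨f, 1⟩)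
  simpa using hcomm.symm

theorem right_eq_one_of_mem_center [Nontrivial D] {w : D ≀ᵣ Q}
    (hw : w ∈ Subgroup.center (D ≀ᵣ Q)) : w.right = 1 := by
  classical
  by_contra hr
  obtain ⟨d, hd⟩ := exists_ne (1 : D)
  have h := left_mul_shift_eq_of_mem_center hw (Pi.mulSingle 1 d) 1
  rw [Pi.mulSingle_eq_same, Pi.mulSingle_eq_of_ne (by simpa using hr), mul_one] at h
  exact hd (right_eq_mul.mp h)

theorem center_eq_bot [Nontrivial D] (hD : Subgroup.center D = ⊥) :
    Subgroup.center (D ≀ᵣ Q) = ⊥ := by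
  refine (Subgroup.eq_bot_iff_forall _).mpr fun w hw => ?_
  have hright := right_eq_one_of_mem_center hw
  have hleft : w.left = 1 := funext fun x => by
    have hx : w.left x ∈ Subgroup.center D := Subgroup.mem_center_iff.mpr fun d => by
      simpa [hright] using (left_mul_shift_eq_of_mem_center hw (fun _ => d) x).symm
    rwa [hD, Subgroup.mem_bot] at hx
  ext <;> simp [hleft, hright]

theorem rightHom_surjective : Function.Surjective (rightHom : D ≀ᵣ Q →* Q) :=
  fun q => ⟨inl q, rfl⟩

end RegularWreathProduct

/-- Every finite group is isomorphic to a quotient of a finite group with trivial centre. -/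
theorem exists_finite_centerless_group_with_surjection_onto
    (G : Type) [Group G] [Finite G] :
    ∃ (H : Type) (_ : Group H), Finite H ∧ Subgroup.center H = ⊥ ∧
      ∃ f : H →* G, Function.Surjective f :=
  ⟨DihedralGroup 3 ≀ᵣ G, inferInstance, inferInstance,
    RegularWreathProduct.center_eq_bot (DihedralGroup.center_eq_bot_of_odd_ne_one (by decide)
      (by decide)),
    RegularWreathProduct.rightHom, RegularWreathProduct.rightHom_surjective⟩
end

section
/- Let K/k be a finite Galois field extension with Galois group Γ and let n ≥ 1. Then the first nonabelian Galois cohomology set H^1(Γ, GL_n(K)) is trivial: every 1-cocycle c : Γ → GL_n(K) (satisfying c(στ) = c(σ)·σ(c(τ))) is of the form c(σ) = b⁻¹·σ(b) for some b ∈ GL_n(K). -/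
/-!
Twist the entrywise action of `Γ` on `K^n` by the cocycle: `σ ⋆ v = c σ · σ(v)`. If the columns
of an invertible matrix `B` are `⋆`-fixed, then `c σ · σ(B) = B`, so `b = B⁻¹` splits `c`. Twisted
traces `∑ σ, c σ · σ(v)` are `⋆`-fixed by the cocycle identity, and they span `K^n`: if `w` is
orthogonal to all of them, testing on `v = x eⱼ` gives `∑ σ, (w c(σ))ⱼ σ(x) = 0` for every `x`, so
by Dedekind's independence of characters `w c(1) = 0`, whence `w = 0`.
-/

open Matrix

theorem AlgEquiv.linearIndependent_coeFn (k K : Type*) [CommSemiring k] [Field K] [Algebra k K] :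
    LinearIndependent K (fun σ : K ≃ₐ[k] K => (σ : K → K)) :=
  (linearIndependent_monoidHom K K).comp (fun σ : K ≃ₐ[k] K => (σ : K →* K))
    fun _ _ h => AlgEquiv.ext fun x => DFunLike.congr_fun h x

theorem span_eq_top_of_forall_dotProduct_eq_zero {K ι : Type*} [Field K] [Fintype ι]
    [DecidableEq ι] {S : Set (ι → K)} (hS : ∀ w : ι → K, (∀ v ∈ S, w ⬝ᵥ v = 0) → w = 0) :
    Submodule.span K S = ⊤ := by
  by_contra hne
  obtain ⟨f, hf, hfS⟩ := Submodule.exists_dual_map_eq_bot_of_lt_top (lt_top_iff_ne_top.2 hne)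
    inferInstance
  obtain ⟨w, rfl⟩ := (dotProductEquiv K ι).surjective f
  refine hf ?_
  rw [hS w fun v hv => ?_, map_zero]
  exact (Submodule.mem_bot K).1 (hfS ▸ Submodule.mem_map_of_mem (Submodule.subset_span hv))

theorem Matrix.exists_isUnit_forall_col_mem {K ι : Type*} [Field K] [Fintype ι] [DecidableEq ι]
    {S : Set (ι → K)} (hS : Submodule.span K S = ⊤) :
    ∃ B : Matrix ι ι K, IsUnit B ∧ ∀ j, B.col j ∈ S := by
  obtain ⟨s, hsS, hs_span, hs_li⟩ := exists_linearIndependent K S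
  let e : s ≃ ι := (Module.Basis.mk hs_li (by rw [Subtype.range_coe, hs_span, hS])).indexEquiv
    (Pi.basisFun K ι)
  refine ⟨(of fun j => (e.symm j : ι → K))ᵀ, ?_, fun j => hsS (e.symm j).2⟩
  exact linearIndependent_cols_iff_isUnit.1 (hs_li.comp e.symm e.symm.injective)

theorem Matrix.mul_map_eq_self_of_forall_col {K ι : Type*} [Semiring K] [Fintype ι]
    (M B : Matrix ι ι K) (f : K → K) (h : ∀ j, M *ᵥ (f ∘ B.col j) = B.col j) :
    M * B.map f = B := by
  ext i j
  exact congrFun (h j) i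

section TwistedTrace

variable {k K ι : Type*} [Field k] [Field K] [Algebra k K] [FiniteDimensional k K] [Fintype ι]

noncomputable def twistedTrace (c : (K ≃ₐ[k] K) → Matrix ι ι K) (v : ι → K) : ι → K :=
  ∑ σ, c σ *ᵥ (σ ∘ v)

theorem mulVec_comp_twistedTrace {c : (K ≃ₐ[k] K) → Matrix ι ι K}
    (hc : ∀ σ τ : K ≃ₐ[k] K, c (σ * τ) = c σ * (c τ).map σ) (σ : K ≃ₐ[k] K) (v : ι → K) :
    c σ *ᵥ (σ ∘ twistedTrace c v) = twistedTrace c v := by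
  have h : ⇑σ ∘ twistedTrace c v = ∑ τ, (c τ).map σ *ᵥ (⇑(σ * τ) ∘ v) := by
    ext i
    simp only [twistedTrace, Function.comp_apply, Finset.sum_apply, map_sum]
    exact Finset.sum_congr rfl fun τ _ => RingHom.map_mulVec (σ : K →+* K) (c τ) _ i
  rw [h, mulVec_sum]
  simp_rw [mulVec_mulVec, ← hc]
  exact Fintype.sum_bijective (σ * ·) (Group.mulLeft_bijective σ) _ _ fun _ => rfl

theorem span_range_twistedTrace [DecidableEq ι] {c : (K ≃ₐ[k] K) → Matrix ι ι K}
    (hc : IsUnit (c 1)) : Submodule.span K (Set.range (twistedTrace c)) = ⊤ := by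
  refine span_eq_top_of_forall_dotProduct_eq_zero fun w hw => ?_
  have h : ∀ j, ∑ σ : K ≃ₐ[k] K, (w ⬝ᵥ (c σ).col j) • (σ : K → K) = 0 := by
    intro j
    ext x
    have hσ : ∀ σ : K ≃ₐ[k] K, ⇑σ ∘ Pi.single j x = Pi.single j (σ x) := fun σ =>
      funext (Pi.apply_single (fun _ => σ) (fun _ => map_zero σ) j x)
    simpa [twistedTrace, dotProduct_sum, dotProduct_mulVec, hσ, dotProduct_single, mul_comm]
      using hw _ ⟨Pi.single j x, rfl⟩
  have h0 : w ᵥ* c 1 = 0 := funext fun j =>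
    Fintype.linearIndependent_iff.1 (AlgEquiv.linearIndependent_coeFn k K) _ (h j) 1
  exact (vecMul_injective_iff_isUnit.2 hc) (h0.trans (zero_vecMul _).symm)

end TwistedTrace

theorem hilbert90_GLn_general
    (k K : Type) [Field k] [Field K] [Algebra k K] [FiniteDimensional k K]
    (n : ℕ) (c : (K ≃ₐ[k] K) → GL (Fin n) K)
    (hc : ∀ σ τ : K ≃ₐ[k] K,
      ((c (σ * τ) : Matrix (Fin n) (Fin n) K))
        = (c σ : Matrix (Fin n) (Fin n) K) * (c τ : Matrix (Fin n) (Fin n) K).map σ) :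
    ∃ b : GL (Fin n) K, ∀ σ : K ≃ₐ[k] K,
      (c σ : Matrix (Fin n) (Fin n) K)
        = (↑(b⁻¹) : Matrix (Fin n) (Fin n) K) * (b : Matrix (Fin n) (Fin n) K).map σ := by
  let c' : (K ≃ₐ[k] K) → Matrix (Fin n) (Fin n) K := fun σ => c σ
  obtain ⟨B, hB, hB_col⟩ := exists_isUnit_forall_col_mem (span_range_twistedTrace (c := c')
    (c 1).isUnit)
  have hfix : ∀ σ : K ≃ₐ[k] K, c' σ * B.map σ = B := fun σ =>
    mul_map_eq_self_of_forall_col _ _ _ fun j => by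
      obtain ⟨v, hv⟩ := hB_col j
      exact hv ▸ mulVec_comp_twistedTrace hc σ v
  obtain ⟨u, rfl⟩ := hB
  refine ⟨u⁻¹, fun σ => ?_⟩
  have hu : c σ = u * GeneralLinearGroup.map (σ : K →+* K) u⁻¹ := by
    rw [GeneralLinearGroup.map_inv]
    exact eq_mul_inv_of_mul_eq (Units.ext (hfix σ))
  rw [inv_inv, hu]
  rfl

/-- Hilbert's Theorem 90 for `GL_n`: for a finite Galois extension `K/k` with group
`Γ = Gal(K/k)`, every 1-cocycle `c : Γ → GL_n(K)` (with `Γ` acting entrywise) is a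
coboundary: `c(σ) = b⁻¹ ⬝ σ(b)` for some `b ∈ GL_n(K)`. -/
theorem hilbert90_GLn
    (k K : Type) [Field k] [Field K] [Algebra k K] [FiniteDimensional k K] [IsGalois k K]
    (n : ℕ) (c : (K ≃ₐ[k] K) → GL (Fin n) K)
    (hc : ∀ σ τ : K ≃ₐ[k] K,
      ((c (σ * τ) : Matrix (Fin n) (Fin n) K))
        = (c σ : Matrix (Fin n) (Fin n) K) * (c τ : Matrix (Fin n) (Fin n) K).map σ) :
    ∃ b : GL (Fin n) K, ∀ σ : K ≃ₐ[k] K,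
      (c σ : Matrix (Fin n) (Fin n) K)
        = (↑(b⁻¹) : Matrix (Fin n) (Fin n) K) * (b : Matrix (Fin n) (Fin n) K).map σ :=
  hilbert90_GLn_general k K n c hc
end
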